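/- Li-Yorke chaos is not preserved under topological conjugacy: there exist metric spaces X and Y, homeomorphisms f : X → X and g : Y → Y, and a homeomorphism h : X → Y with h ∘ f = g ∘ h, such that f is Li-Yorke chaotic but g is not Li-Yorke chaotic. (One may take X the open unit disk 𝔻 ⊆ ℂ and Y = ℂ.) -/

import Mathlib

/-!
Conjugate the translation `t ↦ t + 1` of `ℝ`, an isometry and hence free of Li-Yorke pairs, onto
the image of the embedding `curve t = (wave t, exp (-t))` of `ℝ` into the plane, where `wave` is
`4`-periodic, equal to `sin² (π t / 2)` on `[0, 2]` and to `0` on `[2, 4]`. The conjugated map is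
no longer an isometry: as `t → ∞` the curve sweeps back and forth ever closer to the segment
`[0, 1] × {0}`. For distinct `s, t ∈ [0, 1]` the orbits of `curve s` and `curve t` are
`|wave s - wave t|` apart in the limit along the times `4k`, while at the times `4k + 2` both lie
on the vertical axis and converge to the origin.
-/

/-- `{x, y}` is a Li-Yorke chaotic pair for `T` if the distances between the iterates
`Tⁿ x` and `Tⁿ y` have positive limsup and zero liminf. -/
def LiYorkePair {X : Type*} [PseudoEMetricSpace X] (T : X → X) (x y : X) : Prop :=
  0 < Filter.limsup (fun n : ℕ => edist (T^[n] x) (T^[n] y)) Filter.atTop ∧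
    Filter.liminf (fun n : ℕ => edist (T^[n] x) (T^[n] y)) Filter.atTop = 0

/-- `T` is Li-Yorke chaotic if there is an uncountable set all of whose pairs of distinct
points are Li-Yorke chaotic pairs for `T`. -/
def LiYorkeChaotic {X : Type*} [PseudoEMetricSpace X] (T : X → X) : Prop :=
  ∃ Γ : Set X, ¬ Γ.Countable ∧ ∀ x ∈ Γ, ∀ y ∈ Γ, x ≠ y → LiYorkePair T x y

open Filter Set Topology Real
open scoped ENNReal

section LiYorke

variable {X : Type*} [PseudoEMetricSpace X] {T : X → X}

theorem LiYorkePair.of_mapClusterPt {x y : X} {c : ℝ≥0∞} (hc : 0 < c)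
    (hc_cluster : MapClusterPt c atTop fun n ↦ edist (T^[n] x) (T^[n] y))
    (h0_cluster : MapClusterPt 0 atTop fun n ↦ edist (T^[n] x) (T^[n] y)) :
    LiYorkePair T x y :=
  ⟨hc.trans_le hc_cluster.le_limsup, le_antisymm h0_cluster.liminf_le zero_le⟩

theorem Isometry.edist_iterate (hT : Isometry T) (n : ℕ) (x y : X) :
    edist (T^[n] x) (T^[n] y) = edist x y := by
  induction n with
  | zero => rfl
  | succ n ih => rw [Function.iterate_succ_apply', Function.iterate_succ_apply', hT.edist_eq, ih]

theorem Isometry.not_liYorkePair (hT : Isometry T) (x y : X) : ¬ LiYorkePair T x y := by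
  rintro ⟨hsup, hinf⟩
  simp only [hT.edist_iterate, limsup_const, liminf_const] at hsup hinf
  exact hsup.ne' hinf

theorem Isometry.not_liYorkeChaotic (hT : Isometry T) : ¬ LiYorkeChaotic T := by
  rintro ⟨Γ, hΓ, hpair⟩
  obtain ⟨x, hx, y, hy, hxy⟩ := not_subsingleton_iff.1 fun h ↦ hΓ h.countable
  exact hT.not_liYorkePair x y (hpair x hx y hy hxy)

end LiYorke

noncomputable def wave (x : ℝ) : ℝ := max 0 (sin (π * x / 2)) ^ 2

theorem wave_periodic : Function.Periodic wave 4 := by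
  intro x
  rw [wave, wave, show π * (x + 4) / 2 = π * x / 2 + 2 * π by ring, sin_add_two_pi]

theorem sin_pi_mul_div_two_nonneg {x : ℝ} (hx : x ∈ Icc (0 : ℝ) 2) : 0 ≤ sin (π * x / 2) :=
  sin_nonneg_of_nonneg_of_le_pi (by nlinarith [hx.1, pi_pos]) (by nlinarith [hx.2, pi_pos])

theorem wave_eq_sin_sq {x : ℝ} (hx : x ∈ Icc (0 : ℝ) 2) : wave x = sin (π * x / 2) ^ 2 := by
  rw [wave, max_eq_right (sin_pi_mul_div_two_nonneg hx)]

theorem wave_add_two {x : ℝ} (hx : x ∈ Icc (0 : ℝ) 2) : wave (x + 2) = 0 := by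
  have hsin : sin (π * (x + 2) / 2) = -sin (π * x / 2) := by
    rw [show π * (x + 2) / 2 = π * x / 2 + π by ring, sin_add_pi]
  rw [wave, hsin, max_eq_left (neg_nonpos.2 (sin_pi_mul_div_two_nonneg hx)), sq, zero_mul]

theorem wave_strictMonoOn : StrictMonoOn wave (Icc 0 1) := by
  have hIcc : Icc (0 : ℝ) 1 ⊆ Icc 0 2 := Icc_subset_Icc_right one_le_two
  have hmaps : MapsTo (fun x ↦ π * x / 2) (Icc 0 1) (Icc (-(π / 2)) (π / 2)) := fun x hx ↦
    ⟨by nlinarith [hx.1, pi_pos], by nlinarith [hx.2, pi_pos]⟩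
  intro x hx y hy hxy
  rw [wave_eq_sin_sq (hIcc hx), wave_eq_sin_sq (hIcc hy)]
  refine pow_lt_pow_left₀ ?_ (sin_pi_mul_div_two_nonneg (hIcc hx)) two_ne_zero
  exact strictMonoOn_sin (hmaps hx) (hmaps hy) (by nlinarith [pi_pos])

noncomputable def curve (t : ℝ) : ℝ × ℝ := (wave t, exp (-t))

theorem curve_isEmbedding : IsEmbedding curve := by
  -- the second coordinate `t ↦ exp (-t)` alone is already an embedding
  refine IsEmbedding.of_comp (by unfold curve wave; fun_prop) continuous_snd ?_
  exact isOpenEmbedding_exp.isEmbedding.comp (Homeomorph.neg ℝ).isEmbedding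

theorem tendsto_curve_of_wave_eq {u : ℕ → ℝ} {c : ℝ} (hu : Tendsto u atTop atTop)
    (hc : ∀ k, wave (u k) = c) : Tendsto (curve ∘ u) atTop (𝓝 (c, 0)) :=
  (tendsto_const_nhds.congr fun k ↦ (hc k).symm).prodMk_nhds
    (tendsto_exp_neg_atTop_nhds_zero.comp hu)

theorem tendsto_add_natCast_of_le {a : ℕ → ℕ} (ha : ∀ k, k ≤ a k) (t : ℝ) :
    Tendsto (fun k ↦ t + (a k : ℝ)) atTop atTop :=
  tendsto_atTop_add_const_left _ t
    (tendsto_natCast_atTop_atTop.comp (tendsto_atTop_mono ha tendsto_id))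

theorem tendsto_curve_add_four_mul (t : ℝ) :
    Tendsto (fun k : ℕ ↦ curve (t + ((4 * k : ℕ) : ℝ))) atTop (𝓝 (wave t, 0)) := by
  refine tendsto_curve_of_wave_eq (tendsto_add_natCast_of_le (fun k ↦ by omega) t) fun k ↦ ?_
  rw [show t + ((4 * k : ℕ) : ℝ) = t + k * 4 by push_cast; ring, wave_periodic.nat_mul k]

theorem tendsto_curve_add_four_mul_add_two {t : ℝ} (ht : t ∈ Icc (0 : ℝ) 2) :
    Tendsto (fun k : ℕ ↦ curve (t + ((4 * k + 2 : ℕ) : ℝ))) atTop (𝓝 (0, 0)) := by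
  refine tendsto_curve_of_wave_eq (tendsto_add_natCast_of_le (fun k ↦ by omega) t) fun k ↦ ?_
  rw [show t + ((4 * k + 2 : ℕ) : ℝ) = t + 2 + k * 4 by push_cast; ring,
    wave_periodic.nat_mul k, wave_add_two ht]

noncomputable def curveHomeomorph : ℝ ≃ₜ range curve := curve_isEmbedding.toHomeomorph

noncomputable def realShift : ℝ ≃ₜ ℝ := (IsometryEquiv.addRight (1 : ℝ)).toHomeomorph

theorem isometry_realShift : Isometry realShift := (IsometryEquiv.addRight (1 : ℝ)).isometry

theorem realShift_iterate (n : ℕ) (t : ℝ) : realShift^[n] t = t + n := by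
  have : ⇑realShift = (· + 1) := funext (IsometryEquiv.addRight_apply 1)
  rw [this, add_right_iterate_apply, nsmul_one]

noncomputable def curveShift : range curve ≃ₜ range curve :=
  curveHomeomorph.symm.trans (realShift.trans curveHomeomorph)

theorem semiconj_curveShift : Function.Semiconj curveHomeomorph.symm curveShift realShift :=
  fun x ↦ by simp [curveShift]

theorem curveShift_iterate (n : ℕ) (t : ℝ) :
    curveShift^[n] (curveHomeomorph t) = curveHomeomorph (t + n) := by
  rw [← curveHomeomorph.symm_apply_eq, (semiconj_curveShift.iterate_right n).eq,
    Homeomorph.symm_apply_apply, realShift_iterate]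

theorem edist_curveShift_iterate (n : ℕ) (t s : ℝ) :
    edist (curveShift^[n] (curveHomeomorph t)) (curveShift^[n] (curveHomeomorph s)) =
      edist (curve (t + n)) (curve (s + n)) := by
  rw [curveShift_iterate, curveShift_iterate]
  rfl

theorem liYorkePair_curveShift {t s : ℝ} (ht : t ∈ Icc (0 : ℝ) 1) (hs : s ∈ Icc (0 : ℝ) 1)
    (hts : t ≠ s) : LiYorkePair curveShift (curveHomeomorph t) (curveHomeomorph s) := by
  have hIcc : Icc (0 : ℝ) 1 ⊆ Icc 0 2 := Icc_subset_Icc_right one_le_two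
  have hwave : wave t ≠ wave s := wave_strictMonoOn.injOn.ne ht hs hts
  refine LiYorkePair.of_mapClusterPt (c := edist (wave t, (0 : ℝ)) (wave s, 0))
    (edist_pos.2 fun h ↦ hwave (Prod.ext_iff.1 h).1) ?_ ?_ <;>
    simp only [edist_curveShift_iterate]
  · refine MapClusterPt.of_comp (φ := fun k ↦ 4 * k)
      (tendsto_atTop_mono (fun k ↦ show k ≤ 4 * k by omega) tendsto_id) (Tendsto.mapClusterPt ?_)
    exact (tendsto_curve_add_four_mul t).edist (tendsto_curve_add_four_mul s)
  · refine MapClusterPt.of_comp (φ := fun k ↦ 4 * k + 2)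
      (tendsto_atTop_mono (fun k ↦ show k ≤ 4 * k + 2 by omega) tendsto_id)
      (Tendsto.mapClusterPt ?_)
    simpa [Function.comp_def] using (tendsto_curve_add_four_mul_add_two (hIcc ht)).edist
      (tendsto_curve_add_four_mul_add_two (hIcc hs))

theorem liYorkeChaotic_curveShift : LiYorkeChaotic curveShift := by
  refine ⟨curveHomeomorph '' Icc 0 1, fun hcount ↦ ?_, ?_⟩
  · have := hcount.preimage curveHomeomorph.injective
    rw [Homeomorph.preimage_image, Cardinal.Real.Icc_countable_iff] at this
    norm_num at this
  · rintro _ ⟨t, ht, rfl⟩ _ ⟨s, hs, rfl⟩ hne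
    exact liYorkePair_curveShift ht hs (ne_of_apply_ne _ hne)

theorem stmt_19 :
    ∃ (X Y : Type) (_ : MetricSpace X) (_ : MetricSpace Y)
      (f : X ≃ₜ X) (g : Y ≃ₜ Y) (h : X ≃ₜ Y),
      (⇑h ∘ ⇑f = ⇑g ∘ ⇑h) ∧ LiYorkeChaotic (⇑f) ∧ ¬ LiYorkeChaotic (⇑g) :=
  ⟨range curve, ℝ, inferInstance, inferInstance, curveShift, realShift, curveHomeomorph.symm,
    semiconj_curveShift.comp_eq, liYorkeChaotic_curveShift, isometry_realShift.not_liYorkeChaotic⟩
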